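/- Minimal star factorizations: let α = (α_1,...,α_m) be a partition of n and fix a permutation ρ ∈ S_n of cycle type α. The number of tuples (τ_1,...,τ_{n+m-2}) of transpositions, each containing the symbol n, with product ρ and generating a transitive subgroup, equals (n+m-2)! · α_1 α_2 ⋯ α_m / n!. In particular this number does not depend on which cycle of ρ contains the symbol n. -/

import Mathlib

/-- The cycle type of a permutation including fixed points as parts equal to 1. -/
def fullCycleType {n : ℕ} (σ : Equiv.Perm (Fin n)) : Multiset ℕ :=
  σ.cycleType + Multiset.replicate (n - σ.support.card) 1

/-- The factors generate a subgroup acting transitively on `{1,…,n}`. -/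
def TransitiveFactors {n k : ℕ} (τ : Fin k → Equiv.Perm (Fin n)) : Prop :=
  ∀ x y : Fin n, ∃ g ∈ Subgroup.closure (Set.range τ), g x = y

open Equiv Equiv.Perm Finset

variable {n : ℕ}

section Core
variable (st : Fin n)

/-- the cycle-block of `x` under `σ`. -/
def blk (σ : Perm (Fin n)) (x : Fin n) : Finset (Fin n) :=
  Finset.univ.filter (fun y => σ.SameCycle x y)

variable {st}

lemma mem_blk {σ : Perm (Fin n)} {x y : Fin n} : y ∈ blk σ x ↔ σ.SameCycle x y := by
  simp [blk]

lemma self_mem_blk (σ : Perm (Fin n)) (x : Fin n) : x ∈ blk σ x := mem_blk.2 (SameCycle.refl _ _)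

lemma blk_nonempty (σ : Perm (Fin n)) (x : Fin n) : (blk σ x).Nonempty := ⟨x, self_mem_blk σ x⟩

lemma blk_eq_of_sameCycle {σ : Perm (Fin n)} {x y : Fin n} (h : σ.SameCycle x y) :
    blk σ x = blk σ y := by
  ext z; simp only [mem_blk]
  exact ⟨fun hz => h.symm.trans hz, fun hz => h.trans hz⟩

lemma blk_disjoint {σ : Perm (Fin n)} {x y : Fin n} (h : ¬ σ.SameCycle x y) :
    Disjoint (blk σ x) (blk σ y) := by
  rw [Finset.disjoint_left]
  intro z hz hz'
  exact h ((mem_blk.1 hz).trans (mem_blk.1 hz').symm)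

lemma sameCycle_iff_exists_pow {σ : Perm (Fin n)} {x y : Fin n} :
    σ.SameCycle x y ↔ ∃ k : ℕ, (σ ^ k) x = y := by
  constructor
  · intro h
    obtain ⟨i, _, hi⟩ := h.exists_pow_eq'
    exact ⟨i, hi⟩
  · rintro ⟨k, rfl⟩
    exact ⟨k, by norm_cast⟩

lemma sameCycle_fixed {σ : Perm (Fin n)} {x y : Fin n} (hx : σ x = x) (h : σ.SameCycle x y) :
    x = y := by
  rw [sameCycle_iff_exists_pow] at h
  obtain ⟨k, rfl⟩ := h
  induction k with
  | zero => simp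
  | succ m ih => rw [pow_succ, Equiv.Perm.mul_apply, hx]; exact ih

lemma blk_fixed {σ : Perm (Fin n)} {x : Fin n} (hx : σ x = x) : blk σ x = {x} := by
  ext z
  simp only [mem_blk, Finset.mem_singleton]
  exact ⟨fun h => (sameCycle_fixed hx h).symm, fun h => h ▸ SameCycle.refl _ _⟩

lemma blk_subset_support_union (σ : Perm (Fin n)) (x : Fin n) :
    blk σ x ⊆ σ.support ∪ {x} := by
  intro z hz
  rcases eq_or_ne (σ z) z with h | h
  · have := sameCycle_fixed h (mem_blk.1 hz).symm
    simp [this]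
  · simp [Equiv.Perm.mem_support, h]

lemma apply_mem_blk (σ : Perm (Fin n)) (x : Fin n) : σ x ∈ blk σ x :=
  mem_blk.2 ⟨1, by simp⟩

end Core



variable {n : ℕ} {σ : Perm (Fin n)} {a st x y : Fin n}

lemma mulswap_st (ha : a ≠ st) : (σ * Equiv.swap a st) st = σ a := by
  simp [Equiv.Perm.mul_apply, Equiv.swap_apply_right]

lemma mulswap_a : (σ * Equiv.swap a st) a = σ st := by
  simp [Equiv.Perm.mul_apply, Equiv.swap_apply_left]

lemma mulswap_other (hx : x ≠ a) (hx' : x ≠ st) : (σ * Equiv.swap a st) x = σ x := by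
  simp [Equiv.Perm.mul_apply, Equiv.swap_apply_of_ne_of_ne hx hx']

lemma traj_bounded {k : ℕ} (h : ∀ j, j < k → (σ ^ j) x ≠ a ∧ (σ ^ j) x ≠ st) :
    ((σ * Equiv.swap a st) ^ k) x = (σ ^ k) x := by
  induction k with
  | zero => simp
  | succ m ih =>
      have ih' := ih (fun j hj => h j (Nat.lt_succ_of_lt hj))
      have hm := h m (Nat.lt_succ_self m)
      rw [pow_succ', Equiv.Perm.mul_apply, ih', mulswap_other hm.1 hm.2,
        pow_succ', Equiv.Perm.mul_apply]

lemma traj_all (hxa : ¬ σ.SameCycle x a) (hxst : ¬ σ.SameCycle x st) (k : ℕ) :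
    ((σ * Equiv.swap a st) ^ k) x = (σ ^ k) x := by
  refine traj_bounded (fun j _ => ⟨fun h => hxa ⟨j, by norm_cast⟩, fun h => hxst ⟨j, by norm_cast⟩⟩)

lemma sameCycle_mulswap_iff (hxa : ¬ σ.SameCycle x a) (hxst : ¬ σ.SameCycle x st) :
    (σ * Equiv.swap a st).SameCycle x y ↔ σ.SameCycle x y := by
  rw [sameCycle_iff_exists_pow, sameCycle_iff_exists_pow]
  constructor <;> rintro ⟨k, rfl⟩ <;> exact ⟨k, by rw [traj_all hxa hxst]⟩

lemma blk_mulswap_eq (hxa : ¬ σ.SameCycle x a) (hxst : ¬ σ.SameCycle x st) :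
    blk (σ * Equiv.swap a st) x = blk σ x := by
  ext z; rw [mem_blk, mem_blk, sameCycle_mulswap_iff hxa hxst]

lemma hit_lemma (hex : ∃ k : ℕ, (σ ^ k) x = a ∨ (σ ^ k) x = st) :
    (σ * Equiv.swap a st).SameCycle x a ∨ (σ * Equiv.swap a st).SameCycle x st := by
  classical
  let k₀ := Nat.find hex
  have hspec : (σ ^ k₀) x = a ∨ (σ ^ k₀) x = st := Nat.find_spec hex
  have hmin : ∀ j, j < k₀ → (σ ^ j) x ≠ a ∧ (σ ^ j) x ≠ st := by
    intro j hj
    have := Nat.find_min hex hj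
    push_neg at this
    exact this
  have htr := traj_bounded (a := a) (st := st) hmin
  rcases hspec with h | h
  · exact Or.inl (sameCycle_iff_exists_pow.2 ⟨k₀, by rw [htr, h]⟩)
  · exact Or.inr (sameCycle_iff_exists_pow.2 ⟨k₀, by rw [htr, h]⟩)

lemma pow_mod_apply {p m : ℕ} (hp : (σ ^ p) x = x) : (σ ^ m) x = (σ ^ (m % p)) x := by
  have h1 : ∀ q, ((σ ^ p) ^ q) x = x := by
    intro q
    induction q with
    | zero => simp
    | succ q ih => rw [pow_succ, Equiv.Perm.mul_apply, hp]; exact ih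
  conv_lhs => rw [← Nat.mod_add_div m p, pow_add, Equiv.Perm.mul_apply, pow_mul, h1]

lemma traj_shift {z w : Fin n} (hz : (σ * Equiv.swap a st) z = σ w) (m : ℕ)
    (h : ∀ j, 1 ≤ j → j ≤ m → (σ ^ j) w ≠ a ∧ (σ ^ j) w ≠ st) :
    ((σ * Equiv.swap a st) ^ (m + 1)) z = (σ ^ (m + 1)) w := by
  induction m with
  | zero => simpa using hz
  | succ m ih =>
      have ih' := ih (fun j h1 h2 => h j h1 (Nat.le_succ_of_le h2))
      have hm := h (m + 1) (Nat.le_add_left 1 m) (le_refl _)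
      rw [pow_succ', Equiv.Perm.mul_apply, ih', mulswap_other hm.1 hm.2,
        pow_succ' σ (m + 1), Equiv.Perm.mul_apply]

lemma merge_sameCycle (ha : a ≠ st) (h : ¬ σ.SameCycle st a) :
    (σ * Equiv.swap a st).SameCycle st a := by
  classical
  have hex : ∃ k : ℕ, (σ ^ (k + 1)) a = a ∨ (σ ^ (k + 1)) a = st := by
    refine ⟨orderOf σ - 1, Or.inl ?_⟩
    have hpos : 0 < orderOf σ := orderOf_pos σ
    rw [Nat.sub_add_cancel hpos, pow_orderOf_eq_one]; rfl
  set h₀ := Nat.find hex with hh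
  have hspec := Nat.find_spec hex
  have Ha : (σ ^ (h₀ + 1)) a = a := by
    rcases hspec with h' | h'
    · exact h'
    · exact absurd (Equiv.Perm.SameCycle.symm ⟨(h₀ + 1 : ℕ), by norm_cast⟩) h
  have hmin : ∀ j, 1 ≤ j → j ≤ h₀ → (σ ^ j) a ≠ a ∧ (σ ^ j) a ≠ st := by
    intro j h1 h2
    have := Nat.find_min hex (show j - 1 < h₀ by omega)
    push_neg at this
    have hj : j - 1 + 1 = j := by omega
    rw [hj] at this
    exact this
  have := traj_shift (mulswap_st ha) h₀ hmin
  exact sameCycle_iff_exists_pow.2 ⟨h₀ + 1, by rw [this, Ha]⟩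

lemma split_not_sameCycle (ha : a ≠ st) (h : σ.SameCycle st a) :
    ¬ (σ * Equiv.swap a st).SameCycle a st := by
  classical
  have hex : ∃ k : ℕ, (σ ^ (k + 1)) st = a ∨ (σ ^ (k + 1)) st = st := by
    obtain ⟨m, hm⟩ := sameCycle_iff_exists_pow.1 h
    have hm0 : m ≠ 0 := by rintro rfl; exact ha (by simpa using hm.symm)
    exact ⟨m - 1, Or.inl (by rwa [Nat.sub_add_cancel (Nat.one_le_iff_ne_zero.2 hm0)])⟩
  set h₀ := Nat.find hex with hh
  have hspec := Nat.find_spec hex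
  have hmin : ∀ j, 1 ≤ j → j ≤ h₀ → (σ ^ j) st ≠ a ∧ (σ ^ j) st ≠ st := by
    intro j h1 h2
    have := Nat.find_min hex (show j - 1 < h₀ by omega)
    push_neg at this
    have hj : j - 1 + 1 = j := by omega
    rw [hj] at this
    exact this
  have Ha : (σ ^ (h₀ + 1)) st = a := by
    rcases hspec with h' | h'
    · exact h'
    · exfalso
      obtain ⟨m, hm⟩ := sameCycle_iff_exists_pow.1 h
      have hmod := pow_mod_apply (p := h₀ + 1) (m := m) h'
      set r := m % (h₀ + 1) with hr
      have hrlt : r < h₀ + 1 := Nat.mod_lt _ (Nat.succ_pos _)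
      have hr0 : r ≠ 0 := by
        rintro h0
        rw [hm, h0] at hmod
        exact ha (by simpa using hmod)
      have := (hmin r (Nat.one_le_iff_ne_zero.2 hr0) (by omega)).1
      rw [hm] at hmod
      exact this hmod.symm
  have htraj : ((σ * Equiv.swap a st) ^ (h₀ + 1)) a = a := by
    rw [traj_shift mulswap_a h₀ hmin, Ha]
  intro hsc
  obtain ⟨m, hm⟩ := sameCycle_iff_exists_pow.1 hsc
  have hmod := pow_mod_apply (p := h₀ + 1) (m := m) htraj
  set r := m % (h₀ + 1) with hr
  have hrlt : r < h₀ + 1 := Nat.mod_lt _ (Nat.succ_pos _)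
  have hr0 : r ≠ 0 := by
    rintro h0
    rw [hm, h0] at hmod
    exact ha (by simpa using hmod.symm)
  have htr : ((σ * Equiv.swap a st) ^ r) a = (σ ^ r) st := by
    have := traj_shift mulswap_a (r - 1) (fun j h1 h2 => hmin j h1 (by omega))
    rwa [Nat.sub_add_cancel (Nat.one_le_iff_ne_zero.2 hr0)] at this
  have := (hmin r (Nat.one_le_iff_ne_zero.2 hr0) (by omega)).2
  rw [hm] at hmod
  rw [htr] at hmod
  exact this hmod.symm


section Part
variable (st : Fin n)

/-- active elements -/
def act (σ : Perm (Fin n)) (S : Finset (Fin n)) : Finset (Fin n) :=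
  σ.support ∪ S ∪ {st}

/-- the set of active cycle-blocks -/
def prt (σ : Perm (Fin n)) (S : Finset (Fin n)) : Finset (Finset (Fin n)) :=
  (act st σ S).image (blk σ)

def NN (σ : Perm (Fin n)) (S : Finset (Fin n)) : ℕ := ∑ c ∈ prt st σ S, c.card

def AA (σ : Perm (Fin n)) (S : Finset (Fin n)) : ℕ := (prt st σ S).card

def VV (σ : Perm (Fin n)) (S : Finset (Fin n)) : ℚ := ∏ c ∈ prt st σ S, (c.card : ℚ)

/-- number of length-`k` star factorizations of `σ` covering `S` -/
def MM (σ : Perm (Fin n)) (S : Finset (Fin n)) : ℕ → ℕ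
  | 0 => if σ = 1 ∧ S = ∅ then 1 else 0
  | (k+1) => ∑ a ∈ Finset.univ.erase st, MM (σ * Equiv.swap a st) (S.erase a) k

variable {st}
variable {σ : Perm (Fin n)} {S : Finset (Fin n)} {a x y : Fin n}

lemma mem_act_iff : x ∈ act st σ S ↔ σ x ≠ x ∨ x ∈ S ∨ x = st := by
  simp [act, Finset.mem_union, Equiv.Perm.mem_support]; tauto

lemma st_mem_act : st ∈ act st σ S := mem_act_iff.2 (Or.inr (Or.inr rfl))

lemma support_subset_act : σ.support ⊆ act st σ S := by
  intro z hz; exact mem_act_iff.2 (Or.inl (Equiv.Perm.mem_support.1 hz))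

lemma blk_subset_act (hx : x ∈ act st σ S) : blk σ x ⊆ act st σ S := by
  intro z hz
  rcases Finset.mem_union.1 (blk_subset_support_union σ x hz) with h | h
  · exact support_subset_act h
  · rwa [Finset.mem_singleton.1 h]

lemma mem_prt {c : Finset (Fin n)} : c ∈ prt st σ S ↔ ∃ x ∈ act st σ S, blk σ x = c := by
  simp [prt]

lemma B0_mem_prt : blk σ st ∈ prt st σ S := mem_prt.2 ⟨st, st_mem_act, rfl⟩

lemma blk_mem_prt (hx : x ∈ act st σ S) : blk σ x ∈ prt st σ S := mem_prt.2 ⟨x, hx, rfl⟩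

lemma blk_eq_of_mem (hy : y ∈ blk σ x) : blk σ x = blk σ y := blk_eq_of_sameCycle (mem_blk.1 hy)

lemma prt_disj {c d : Finset (Fin n)} (hc : c ∈ prt st σ S) (hd : d ∈ prt st σ S)
    (hne : c ≠ d) : Disjoint c d := by
  obtain ⟨u, -, rfl⟩ := mem_prt.1 hc
  obtain ⟨v, -, rfl⟩ := mem_prt.1 hd
  refine blk_disjoint (fun h => hne (blk_eq_of_sameCycle h))

lemma biUnion_prt : (prt st σ S).biUnion id = act st σ S := by
  apply Finset.Subset.antisymm
  · intro z hz
    obtain ⟨c, hc, hzc⟩ := Finset.mem_biUnion.1 hz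
    obtain ⟨u, hu, rfl⟩ := mem_prt.1 hc
    exact blk_subset_act hu hzc
  · intro z hz
    exact Finset.mem_biUnion.2 ⟨blk σ z, blk_mem_prt hz, self_mem_blk σ z⟩

lemma prt_erase_eq : (prt st σ S).erase (blk σ st) =
    (act st σ S \ blk σ st).image (blk σ) := by
  ext c
  simp only [Finset.mem_erase, mem_prt, Finset.mem_image, Finset.mem_sdiff]
  constructor
  · rintro ⟨hne, x, hx, rfl⟩
    refine ⟨x, ⟨hx, fun hmem => hne ?_⟩, rfl⟩
    exact (blk_eq_of_mem hmem).symm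
  · rintro ⟨x, ⟨hx, hnmem⟩, rfl⟩
    refine ⟨fun h => hnmem ?_, x, hx, rfl⟩
    rw [← h]; exact self_mem_blk σ x


-- Case I : a = σ st (and a ≠ st) : the point a is clipped off the star cycle.
lemma act_caseI (ha : a ≠ st) (heq : σ st = a) :
    act st (σ * Equiv.swap a st) (S.erase a) = (act st σ S).erase a := by
  have hfix : (σ * Equiv.swap a st) a = a := by rw [mulswap_a, heq]
  ext z
  simp only [mem_act_iff, Finset.mem_erase]
  constructor
  · rintro (hz | hz | rfl)
    · rcases eq_or_ne z a with rfl | hza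
      · exact absurd hfix hz
      · rcases eq_or_ne z st with rfl | hzst
        · exact ⟨ha.symm, Or.inr (Or.inr rfl)⟩
        · rw [mulswap_other hza hzst] at hz
          exact ⟨hza, Or.inl hz⟩
    · exact ⟨hz.1, Or.inr (Or.inl hz.2)⟩
    · exact ⟨ha.symm, Or.inr (Or.inr rfl)⟩
  · rintro ⟨hza, hz | hz | rfl⟩
    · rcases eq_or_ne z st with rfl | hzst
      · exact Or.inr (Or.inr rfl)
      · rw [← mulswap_other hza hzst] at hz
        exact Or.inl hz
    · exact Or.inr (Or.inl ⟨hza, hz⟩)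
    · exact Or.inr (Or.inr rfl)

lemma blk_st_caseI (ha : a ≠ st) (heq : σ st = a) :
    blk (σ * Equiv.swap a st) st = (blk σ st).erase a := by
  have hfix : (σ * Equiv.swap a st) a = a := by rw [mulswap_a, heq]
  have hsc : σ.SameCycle st a := ⟨1, by simp [heq]⟩
  ext z
  simp only [mem_blk, Finset.mem_erase, mem_blk]
  constructor
  · intro hz
    have hza : z ≠ a := by
      rintro rfl
      exact ha (sameCycle_fixed hfix hz.symm)
    refine ⟨hza, ?_⟩
    by_contra hns
    have hzst : ¬ σ.SameCycle z st := fun h => hns h.symm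
    have hza' : ¬ σ.SameCycle z a := fun h => hns (hsc.trans h.symm)
    exact hzst ((sameCycle_mulswap_iff hza' hzst).1 hz.symm)
  · rintro ⟨hza, hz⟩
    have hex : ∃ k : ℕ, (σ ^ k) z = a ∨ (σ ^ k) z = st := by
      obtain ⟨m, hm⟩ := sameCycle_iff_exists_pow.1 hz.symm
      exact ⟨m, Or.inr hm⟩
    rcases hit_lemma hex with h | h
    · exact absurd (sameCycle_fixed hfix h.symm).symm hza
    · exact h.symm

lemma prt_caseI (ha : a ≠ st) (heq : σ st = a) :
    prt st (σ * Equiv.swap a st) (S.erase a) =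
      insert ((blk σ st).erase a) ((prt st σ S).erase (blk σ st)) := by
  have hsc : σ.SameCycle st a := ⟨1, by simp [heq]⟩
  have hB : blk (σ * Equiv.swap a st) st = (blk σ st).erase a := blk_st_caseI ha heq
  have hAct : act st (σ * Equiv.swap a st) (S.erase a) = (act st σ S).erase a :=
    act_caseI ha heq
  have hout : ∀ x, x ∉ blk σ st → blk (σ * Equiv.swap a st) x = blk σ x := by
    intro x hx
    have hxst : ¬ σ.SameCycle x st := fun h => hx (mem_blk.2 h.symm)
    have hxa : ¬ σ.SameCycle x a := fun h => hx (mem_blk.2 (h.trans hsc.symm).symm)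
    exact blk_mulswap_eq hxa hxst
  ext c
  simp only [mem_prt, hAct, Finset.mem_insert, Finset.mem_erase]
  constructor
  · rintro ⟨x, hx, rfl⟩
    rcases hx with ⟨hxa, hxact⟩
    by_cases hxB : x ∈ blk σ st
    · left
      have : x ∈ blk (σ * Equiv.swap a st) st := by
        rw [hB]; exact Finset.mem_erase.2 ⟨hxa, hxB⟩
      rw [← blk_eq_of_mem this, hB]
    · right
      rw [hout x hxB]
      refine ⟨fun h => hxB ?_, ⟨x, hxact, rfl⟩⟩
      rw [← h]; exact self_mem_blk σ x
  · rintro (rfl | ⟨hne, hc⟩)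
    · exact ⟨st, ⟨ha.symm, st_mem_act⟩, hB⟩
    · obtain ⟨x, hxact, rfl⟩ := hc
      have hxB : x ∉ blk σ st := fun h => hne (blk_eq_of_mem h).symm
      have hxa : x ≠ a := by
        rintro rfl
        exact hxB (mem_blk.2 hsc)
      exact ⟨x, ⟨hxa, hxact⟩, hout x hxB⟩

lemma erased_blk_notmem (ha : a ≠ st) :
    ((blk σ st).erase a) ∉ (prt st σ S).erase (blk σ st) := by
  intro h
  obtain ⟨hne, hmem⟩ := Finset.mem_erase.1 h
  obtain ⟨x, hxact, hx⟩ := mem_prt.1 hmem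
  have hst : st ∈ blk σ x := by
    rw [hx]; exact Finset.mem_erase.2 ⟨ha.symm, self_mem_blk σ st⟩
  have heqb := blk_eq_of_mem hst
  exact hne (by rw [← hx, heqb])


lemma act_mulswap (ha : a ≠ st) (hne : σ st ≠ a) :
    act st (σ * Equiv.swap a st) (S.erase a) = insert a (act st σ S) := by
  ext z
  simp only [mem_act_iff, Finset.mem_insert, Finset.mem_erase]
  constructor
  · rintro (hz | hz | rfl)
    · rcases eq_or_ne z a with rfl | hza
      · exact Or.inl rfl
      · rcases eq_or_ne z st with rfl | hzst
        · exact Or.inr (Or.inr (Or.inr rfl))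
        · rw [mulswap_other hza hzst] at hz
          exact Or.inr (Or.inl hz)
    · exact Or.inr (Or.inr (Or.inl hz.2))
    · exact Or.inr (Or.inr (Or.inr rfl))
  · rintro (rfl | hz | hz | rfl)
    · exact Or.inl (by rw [mulswap_a]; exact hne)
    · rcases eq_or_ne z a with rfl | hza
      · exact Or.inl (by rw [mulswap_a]; exact hne)
      · rcases eq_or_ne z st with rfl | hzst
        · exact Or.inr (Or.inr rfl)
        · exact Or.inl (by rw [mulswap_other hza hzst]; exact hz)
    · rcases eq_or_ne z a with rfl | hza
      · exact Or.inl (by rw [mulswap_a]; exact hne)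
      · exact Or.inr (Or.inl ⟨hza, hz⟩)
    · exact Or.inr (Or.inr rfl)

lemma blk_out (hsc : σ.SameCycle st a) (hx : x ∉ blk σ st) :
    blk (σ * Equiv.swap a st) x = blk σ x := by
  have hxst : ¬ σ.SameCycle x st := fun h => hx (mem_blk.2 h.symm)
  have hxa : ¬ σ.SameCycle x a := fun h => hx (mem_blk.2 (hsc.trans h.symm))
  exact blk_mulswap_eq hxa hxst

lemma blk_out' (hx : x ∉ blk σ st) (hxa : x ∉ blk σ a) :
    blk (σ * Equiv.swap a st) x = blk σ x := by
  have hxst : ¬ σ.SameCycle x st := fun h => hx (mem_blk.2 h.symm)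
  have hxa' : ¬ σ.SameCycle x a := fun h => hxa (mem_blk.2 h.symm)
  exact blk_mulswap_eq hxa' hxst

-- Case II : split into two non-degenerate parts
lemma blk_union_caseII (ha : a ≠ st) (hsc : σ.SameCycle st a) :
    blk (σ * Equiv.swap a st) st ∪ blk (σ * Equiv.swap a st) a = blk σ st := by
  apply Finset.Subset.antisymm
  · intro z hz
    rcases Finset.mem_union.1 hz with hz | hz
    · by_contra hzB
      have hzst : ¬ σ.SameCycle z st := fun h => hzB (mem_blk.2 h.symm)
      have hza : ¬ σ.SameCycle z a := fun h => hzB (mem_blk.2 (hsc.trans h.symm))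
      exact hzst ((sameCycle_mulswap_iff hza hzst).1 (mem_blk.1 hz).symm)
    · by_contra hzB
      have hzst : ¬ σ.SameCycle z st := fun h => hzB (mem_blk.2 h.symm)
      have hza : ¬ σ.SameCycle z a := fun h => hzB (mem_blk.2 (hsc.trans h.symm))
      exact hza ((sameCycle_mulswap_iff hza hzst).1 (mem_blk.1 hz).symm)
  · intro z hz
    have hex : ∃ k : ℕ, (σ ^ k) z = a ∨ (σ ^ k) z = st := by
      obtain ⟨m, hm⟩ := sameCycle_iff_exists_pow.1 (mem_blk.1 hz).symm
      exact ⟨m, Or.inr hm⟩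
    rcases hit_lemma hex with h | h
    · exact Finset.mem_union_right _ (mem_blk.2 h.symm)
    · exact Finset.mem_union_left _ (mem_blk.2 h.symm)

lemma prt_caseII (ha : a ≠ st) (hsc : σ.SameCycle st a) (hne : σ st ≠ a) :
    prt st (σ * Equiv.swap a st) (S.erase a) =
      insert (blk (σ * Equiv.swap a st) st)
        (insert (blk (σ * Equiv.swap a st) a) ((prt st σ S).erase (blk σ st))) := by
  have hAct : act st (σ * Equiv.swap a st) (S.erase a) = insert a (act st σ S) :=
    act_mulswap ha hne
  have hamem : a ∈ act st σ S := by
    refine mem_act_iff.2 (Or.inl (fun h => ha (sameCycle_fixed h hsc.symm)))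
  have hU := blk_union_caseII (σ := σ) ha hsc
  ext c
  simp only [mem_prt, hAct, Finset.mem_insert, Finset.mem_erase]
  constructor
  · rintro ⟨x, hx, rfl⟩
    rcases hx with rfl | hxact
    · exact Or.inr (Or.inl rfl)
    · by_cases hxB : x ∈ blk σ st
      · rw [← hU] at hxB
        rcases Finset.mem_union.1 hxB with h | h
        · exact Or.inl (blk_eq_of_mem h).symm
        · exact Or.inr (Or.inl (blk_eq_of_mem h).symm)
      · right; right
        rw [blk_out hsc hxB]
        refine ⟨fun h => hxB ?_, ⟨x, hxact, rfl⟩⟩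
        rw [← h]; exact self_mem_blk σ x
  · rintro (rfl | rfl | ⟨hnec, hc⟩)
    · exact ⟨st, Or.inr st_mem_act, rfl⟩
    · exact ⟨a, Or.inl rfl, rfl⟩
    · obtain ⟨x, hxact, rfl⟩ := hc
      have hxB : x ∉ blk σ st := fun h => hnec (blk_eq_of_mem h).symm
      exact ⟨x, Or.inr hxact, blk_out hsc hxB⟩

lemma caseII_facts (ha : a ≠ st) (hsc : σ.SameCycle st a) (hne : σ st ≠ a) :
    Disjoint (blk (σ * Equiv.swap a st) st) (blk (σ * Equiv.swap a st) a)
    ∧ blk (σ * Equiv.swap a st) st ∉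
        insert (blk (σ * Equiv.swap a st) a) ((prt st σ S).erase (blk σ st))
    ∧ blk (σ * Equiv.swap a st) a ∉ (prt st σ S).erase (blk σ st) := by
  have hsep := split_not_sameCycle ha hsc
  have hD : Disjoint (blk (σ * Equiv.swap a st) st) (blk (σ * Equiv.swap a st) a) :=
    blk_disjoint (fun h => hsep h.symm)
  refine ⟨hD, ?_, ?_⟩
  · intro h
    rcases Finset.mem_insert.1 h with h | h
    · have hst : st ∈ blk (σ * Equiv.swap a st) a := by
        rw [← h]; exact self_mem_blk _ st
      exact hsep (mem_blk.1 hst)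
    · obtain ⟨hne2, hmem⟩ := Finset.mem_erase.1 h
      obtain ⟨x, hxact, hx⟩ := mem_prt.1 hmem
      have hst : st ∈ blk σ x := by rw [hx]; exact self_mem_blk _ st
      exact hne2 (by rw [← hx, blk_eq_of_mem hst])
  · intro h
    obtain ⟨hne2, hmem⟩ := Finset.mem_erase.1 h
    obtain ⟨x, hxact, hx⟩ := mem_prt.1 hmem
    have hamem : a ∈ blk σ x := by rw [hx]; exact self_mem_blk _ a
    have heq2 : blk σ x = blk σ a := blk_eq_of_mem hamem
    have haB : a ∈ blk σ st := mem_blk.2 hsc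
    exact hne2 (by rw [← hx, heq2, ← blk_eq_of_mem haB])

-- Merge case : ¬ SameCycle σ st a
lemma blk_st_merge (ha : a ≠ st) (hnsc : ¬ σ.SameCycle st a) :
    blk (σ * Equiv.swap a st) st = blk σ st ∪ blk σ a := by
  have hsc' := merge_sameCycle ha hnsc
  apply Finset.Subset.antisymm
  · intro z hz
    by_contra hzB
    rw [Finset.mem_union] at hzB
    push_neg at hzB
    have hzst : ¬ σ.SameCycle z st := fun h => hzB.1 (mem_blk.2 h.symm)
    have hza : ¬ σ.SameCycle z a := fun h => hzB.2 (mem_blk.2 h.symm)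
    exact hzst ((sameCycle_mulswap_iff hza hzst).1 (mem_blk.1 hz).symm)
  · intro z hz
    have hex : ∃ k : ℕ, (σ ^ k) z = a ∨ (σ ^ k) z = st := by
      rcases Finset.mem_union.1 hz with h | h
      · obtain ⟨m, hm⟩ := sameCycle_iff_exists_pow.1 (mem_blk.1 h).symm
        exact ⟨m, Or.inr hm⟩
      · obtain ⟨m, hm⟩ := sameCycle_iff_exists_pow.1 (mem_blk.1 h).symm
        exact ⟨m, Or.inl hm⟩
    rcases hit_lemma hex with h | h
    · exact mem_blk.2 (h.trans hsc'.symm).symm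
    · exact mem_blk.2 h.symm

lemma prt_merge (ha : a ≠ st) (hnsc : ¬ σ.SameCycle st a) :
    prt st (σ * Equiv.swap a st) (S.erase a) =
      insert (blk σ st ∪ blk σ a) (((prt st σ S).erase (blk σ st)).erase (blk σ a)) := by
  have hne : σ st ≠ a := fun h => hnsc ⟨1, by simpa using h⟩
  have hAct := act_mulswap (σ := σ) (S := S) ha hne
  have hU := blk_st_merge (σ := σ) ha hnsc
  have hsc' := merge_sameCycle (σ := σ) ha hnsc
  ext c
  simp only [mem_prt, hAct, Finset.mem_insert, Finset.mem_erase]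
  constructor
  · rintro ⟨x, hx, rfl⟩
    rcases hx with rfl | hxact
    · left; rw [← hU, ← blk_eq_of_sameCycle hsc']
    · by_cases hxB : x ∈ blk σ st ∪ blk σ a
      · left
        rw [← hU] at hxB
        rw [← blk_eq_of_mem hxB, hU]
      · rw [Finset.mem_union] at hxB
        push_neg at hxB
        right
        rw [blk_out' hxB.1 hxB.2]
        refine ⟨fun h => hxB.2 ?_, fun h => hxB.1 ?_, ⟨x, hxact, rfl⟩⟩
        · rw [← h]; exact self_mem_blk σ x
        · rw [← h]; exact self_mem_blk σ x
  · rintro (rfl | ⟨hnea, hnest, hc⟩)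
    · exact ⟨st, Or.inr st_mem_act, hU⟩
    · obtain ⟨x, hxact, rfl⟩ := hc
      have hx1 : x ∉ blk σ st := fun h => hnest (blk_eq_of_mem h).symm
      have hx2 : x ∉ blk σ a := fun h => hnea (blk_eq_of_mem h).symm
      exact ⟨x, Or.inr hxact, blk_out' hx1 hx2⟩

lemma merge_notmem (ha : a ≠ st) :
    (blk σ st ∪ blk σ a) ∉ ((prt st σ S).erase (blk σ st)).erase (blk σ a) := by
  intro h
  obtain ⟨hne2, hmem⟩ := Finset.mem_erase.1 (Finset.mem_erase.1 h).2
  obtain ⟨x, hxact, hx⟩ := mem_prt.1 hmem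
  have hst : st ∈ blk σ x := by
    rw [hx]; exact Finset.mem_union_left _ (self_mem_blk σ st)
  exact hne2 (by rw [← hx, blk_eq_of_mem hst])

lemma blk_a_fixed_not_mem_prt (hact : a ∉ act st σ S) : blk σ a ∉ prt st σ S := by
  intro h
  obtain ⟨x, hxact, hx⟩ := mem_prt.1 h
  have hax : a ∈ blk σ x := by rw [hx]; exact self_mem_blk σ a
  have := blk_eq_of_mem hax
  -- then x and a same cycle; a is fixed since a ∉ act
  have hafix : σ a = a := by
    by_contra hfa
    exact hact (mem_act_iff.2 (Or.inl hfa))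
  have : x = a := sameCycle_fixed hafix (mem_blk.1 hax).symm |>.symm
  exact hact (this ▸ hxact)


lemma AA_pos : 1 ≤ AA st σ S := Finset.card_pos.2 ⟨blk σ st, B0_mem_prt⟩

lemma NN_eq : NN st σ S = ∑ c ∈ (prt st σ S).erase (blk σ st), c.card + (blk σ st).card :=
  (Finset.sum_erase_add _ _ B0_mem_prt).symm

lemma VV_eq : VV st σ S = (((blk σ st).card : ℚ)) * ∏ c ∈ (prt st σ S).erase (blk σ st),
    (c.card : ℚ) := (Finset.mul_prod_erase _ _ B0_mem_prt).symm

lemma VV_pos : 0 < VV st σ S := by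
  apply Finset.prod_pos
  intro c hc
  obtain ⟨x, -, rfl⟩ := mem_prt.1 hc
  exact_mod_cast Finset.card_pos.2 (blk_nonempty σ x)

lemma caseI_numbers (ha : a ≠ st) (heq : σ st = a) :
    ∃ r : ℚ, NN st (σ * Equiv.swap a st) (S.erase a) + 1 = NN st σ S
      ∧ AA st (σ * Equiv.swap a st) (S.erase a) = AA st σ S
      ∧ VV st σ S = ((blk σ st).card : ℚ) * r
      ∧ VV st (σ * Equiv.swap a st) (S.erase a) = (((blk σ st).card : ℚ) - 1) * r
      ∧ 2 ≤ (blk σ st).card := by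
  have hP := prt_caseI (S := S) ha heq
  have hnm := erased_blk_notmem (S := S) (σ := σ) ha
  have haB : a ∈ blk σ st := mem_blk.2 ⟨1, by simp [heq]⟩
  have hc2 : 2 ≤ (blk σ st).card := Finset.one_lt_card.2 ⟨a, haB, st, self_mem_blk σ st, ha⟩
  refine ⟨∏ c ∈ (prt st σ S).erase (blk σ st), (c.card : ℚ), ?_, ?_, VV_eq, ?_, hc2⟩
  · rw [NN, hP, Finset.sum_insert hnm, Finset.card_erase_of_mem haB, NN_eq (S := S)]
    omega
  · rw [AA, hP, Finset.card_insert_of_notMem hnm, Finset.card_erase_of_mem B0_mem_prt,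
      AA]
    have := AA_pos (st := st) (σ := σ) (S := S)
    rw [AA] at this
    omega
  · rw [VV, hP, Finset.prod_insert hnm, Finset.card_erase_of_mem haB]
    congr 1
    have : (1:ℕ) ≤ (blk σ st).card := le_trans (by norm_num) hc2
    push_cast [Nat.cast_sub this]
    ring

lemma caseII_numbers (ha : a ≠ st) (hsc : σ.SameCycle st a) (hne : σ st ≠ a) :
    NN st (σ * Equiv.swap a st) (S.erase a) = NN st σ S
      ∧ AA st (σ * Equiv.swap a st) (S.erase a) = AA st σ S + 1 := by
  have hP := prt_caseII (S := S) ha hsc hne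
  obtain ⟨hD, hn1, hn2⟩ := caseII_facts (S := S) ha hsc hne
  have hU := blk_union_caseII (σ := σ) ha hsc
  have hcards : (blk (σ * Equiv.swap a st) st).card + (blk (σ * Equiv.swap a st) a).card
      = (blk σ st).card := by
    rw [← Finset.card_union_of_disjoint hD, hU]
  constructor
  · rw [NN, hP, Finset.sum_insert hn1, Finset.sum_insert hn2, NN_eq (S := S)]
    omega
  · rw [AA, hP, Finset.card_insert_of_notMem hn1, Finset.card_insert_of_notMem hn2,
      Finset.card_erase_of_mem B0_mem_prt, AA]
    have := AA_pos (st := st) (σ := σ) (S := S)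
    rw [AA] at this
    omega

lemma Ba_mem_erase (hnsc : ¬ σ.SameCycle st a) (hact : a ∈ act st σ S) :
    blk σ a ∈ (prt st σ S).erase (blk σ st) := by
  refine Finset.mem_erase.2 ⟨?_, blk_mem_prt hact⟩
  intro h
  have : a ∈ blk σ st := by rw [← h]; exact self_mem_blk σ a
  exact hnsc (mem_blk.1 this)

lemma caseIII_numbers (ha : a ≠ st) (hnsc : ¬ σ.SameCycle st a) (hact : a ∈ act st σ S) :
    ∃ r : ℚ, NN st (σ * Equiv.swap a st) (S.erase a) = NN st σ S
      ∧ AA st (σ * Equiv.swap a st) (S.erase a) + 1 = AA st σ S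
      ∧ VV st σ S = (((blk σ st).card : ℚ) * ((blk σ a).card : ℚ)) * r
      ∧ VV st (σ * Equiv.swap a st) (S.erase a)
          = (((blk σ st).card : ℚ) + ((blk σ a).card : ℚ)) * r := by
  have hP := prt_merge (S := S) ha hnsc
  have hnm := merge_notmem (S := S) (σ := σ) (a := a) ha
  have hBa := Ba_mem_erase (S := S) hnsc hact
  have hD : Disjoint (blk σ st) (blk σ a) := blk_disjoint hnsc
  have hcard : (blk σ st ∪ blk σ a).card = (blk σ st).card + (blk σ a).card :=
    Finset.card_union_of_disjoint hD
  have hsum2 : ∑ c ∈ ((prt st σ S).erase (blk σ st)).erase (blk σ a), (c.card : ℕ)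
      + (blk σ a).card = ∑ c ∈ (prt st σ S).erase (blk σ st), c.card :=
    Finset.sum_erase_add _ _ hBa
  have hprod2 : (((blk σ a).card : ℚ))
      * ∏ c ∈ ((prt st σ S).erase (blk σ st)).erase (blk σ a), (c.card : ℚ)
      = ∏ c ∈ (prt st σ S).erase (blk σ st), (c.card : ℚ) :=
    Finset.mul_prod_erase _ (fun c => (c.card : ℚ)) hBa
  refine ⟨∏ c ∈ ((prt st σ S).erase (blk σ st)).erase (blk σ a), (c.card : ℚ),
    ?_, ?_, ?_, ?_⟩
  · rw [NN, hP, Finset.sum_insert hnm, hcard, NN_eq (S := S)]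
    omega
  · rw [AA, hP, Finset.card_insert_of_notMem hnm, Finset.card_erase_of_mem hBa,
      Finset.card_erase_of_mem B0_mem_prt, AA]
    have h1 := AA_pos (st := st) (σ := σ) (S := S)
    rw [AA] at h1
    have h2 : 1 ≤ ((prt st σ S).erase (blk σ st)).card := Finset.card_pos.2 ⟨_, hBa⟩
    have h3 : ((prt st σ S).erase (blk σ st)).card = (prt st σ S).card - 1 :=
      Finset.card_erase_of_mem B0_mem_prt
    omega
  · rw [VV_eq (S := S), ← hprod2]; ring
  · rw [VV, hP, Finset.prod_insert hnm, hcard]; push_cast; ring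

lemma caseIV_numbers (ha : a ≠ st) (hnsc : ¬ σ.SameCycle st a) (hact : a ∉ act st σ S) :
    NN st (σ * Equiv.swap a st) (S.erase a) = NN st σ S + 1
      ∧ AA st (σ * Equiv.swap a st) (S.erase a) = AA st σ S := by
  have hP := prt_merge (S := S) ha hnsc
  have hnm := merge_notmem (S := S) (σ := σ) (a := a) ha
  have hafix : σ a = a := by
    by_contra h
    exact hact (mem_act_iff.2 (Or.inl h))
  have hBa : blk σ a = {a} := blk_fixed hafix
  have hnmem : blk σ a ∉ (prt st σ S).erase (blk σ st) :=
    fun h => blk_a_fixed_not_mem_prt hact (Finset.mem_erase.1 h).2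
  have hErase : ((prt st σ S).erase (blk σ st)).erase (blk σ a)
      = (prt st σ S).erase (blk σ st) := Finset.erase_eq_of_notMem hnmem
  have hanB : a ∉ blk σ st := fun h => hnsc (mem_blk.1 h)
  have hcard : (blk σ st ∪ blk σ a).card = (blk σ st).card + 1 := by
    rw [hBa, Finset.union_comm, ← Finset.insert_eq, Finset.card_insert_of_notMem hanB]
  constructor
  · rw [NN, hP, hErase, Finset.sum_insert (hErase ▸ hnm), hcard, NN_eq (S := S)]
    omega
  · rw [AA, hP, hErase, Finset.card_insert_of_notMem (hErase ▸ hnm),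
      Finset.card_erase_of_mem B0_mem_prt, AA]
    have := AA_pos (st := st) (σ := σ) (S := S)
    rw [AA] at this
    omega


lemma act_sdiff_biUnion :
    act st σ S \ blk σ st = ((prt st σ S).erase (blk σ st)).biUnion id := by
  ext z
  simp only [Finset.mem_sdiff, Finset.mem_biUnion, Finset.mem_erase, id]
  constructor
  · rintro ⟨hz, hzB⟩
    refine ⟨blk σ z, ⟨fun h => hzB ?_, blk_mem_prt hz⟩, self_mem_blk σ z⟩
    rw [← h]; exact self_mem_blk σ z
  · rintro ⟨c, ⟨hne, hc⟩, hzc⟩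
    obtain ⟨x, hx, rfl⟩ := mem_prt.1 hc
    refine ⟨blk_subset_act hx hzc, fun hzB => hne ?_⟩
    rw [blk_eq_of_mem hzc, blk_eq_of_mem hzB]

lemma prt_pairwiseDisjoint :
    ((((prt st σ S).erase (blk σ st)) : Finset (Finset (Fin n))) : Set (Finset (Fin n))).PairwiseDisjoint id := by
  intro c hc d hd hne
  exact prt_disj (Finset.mem_of_mem_erase hc) (Finset.mem_of_mem_erase hd) hne

lemma sum_weights :
    ∑ a ∈ act st σ S \ blk σ st, ((1:ℚ)/((blk σ a).card : ℚ) + 1/((blk σ st).card : ℚ))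
    = ((AA st σ S : ℚ) - 1)
      + (((NN st σ S : ℚ) - ((blk σ st).card : ℚ))/((blk σ st).card : ℚ)) := by
  rw [act_sdiff_biUnion, Finset.sum_biUnion prt_pairwiseDisjoint]
  have hstep : ∀ c ∈ (prt st σ S).erase (blk σ st),
      ∑ z ∈ (id c : Finset (Fin n)), ((1:ℚ)/((blk σ z).card : ℚ) + 1/((blk σ st).card : ℚ))
      = 1 + ((c.card : ℚ))/((blk σ st).card : ℚ) := by
    intro c hc
    obtain ⟨x, hx, rfl⟩ := mem_prt.1 (Finset.mem_of_mem_erase hc)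
    have hcpos : (0:ℚ) < ((blk σ x).card : ℚ) := by
      exact_mod_cast Finset.card_pos.2 (blk_nonempty σ x)
    have : ∀ z ∈ blk σ x, ((1:ℚ)/((blk σ z).card : ℚ) + 1/((blk σ st).card : ℚ))
        = (1/((blk σ x).card : ℚ) + 1/((blk σ st).card : ℚ)) := by
      intro z hz
      rw [← blk_eq_of_mem hz]
    have hsum := Finset.sum_congr rfl this
    simp only [id_eq]
    rw [hsum, Finset.sum_const, nsmul_eq_mul]
    field_simp
  rw [Finset.sum_congr rfl hstep, Finset.sum_add_distrib, Finset.sum_const, nsmul_eq_mul,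
    mul_one, ← Finset.sum_div]
  have h1 : (((prt st σ S).erase (blk σ st)).card : ℚ) = (AA st σ S : ℚ) - 1 := by
    have hA := AA_pos (st := st) (σ := σ) (S := S)
    rw [AA] at hA
    rw [Finset.card_erase_of_mem B0_mem_prt, AA, Nat.cast_sub hA]
    norm_num
  have h2 : ∑ c ∈ (prt st σ S).erase (blk σ st), ((c.card : ℚ))
      = (NN st σ S : ℚ) - ((blk σ st).card : ℚ) := by
    have := NN_eq (st := st) (σ := σ) (S := S)
    have : (NN st σ S : ℚ)
        = ∑ c ∈ (prt st σ S).erase (blk σ st), ((c.card : ℚ)) + ((blk σ st).card : ℚ) := by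
      rw [this]; push_cast; ring
    linarith
  rw [h1, h2]

lemma univ_erase_decomp :
    Finset.univ.erase st =
      ((blk σ st).erase st) ∪ ((act st σ S \ blk σ st) ∪ (Finset.univ \ act st σ S)) := by
  ext z
  simp only [Finset.mem_erase, Finset.mem_union, Finset.mem_sdiff, Finset.mem_univ,
    true_and, and_true]
  constructor
  · intro hz
    by_cases hB : z ∈ blk σ st
    · exact Or.inl ⟨hz, hB⟩
    · by_cases hA : z ∈ act st σ S
      · exact Or.inr (Or.inl ⟨hA, hB⟩)
      · exact Or.inr (Or.inr hA)
  · rintro (⟨hz, -⟩ | ⟨hA, hB⟩ | hA)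
    · exact hz
    · rintro rfl; exact hB (self_mem_blk σ z)
    · rintro rfl; exact hA st_mem_act

lemma decomp_disj1 :
    Disjoint ((blk σ st).erase st)
      ((act st σ S \ blk σ st) ∪ (Finset.univ \ act st σ S)) := by
  rw [Finset.disjoint_left]
  intro z hz hz'
  have hzB : z ∈ blk σ st := Finset.mem_of_mem_erase hz
  rcases Finset.mem_union.1 hz' with h | h
  · exact (Finset.mem_sdiff.1 h).2 hzB
  · exact (Finset.mem_sdiff.1 h).2 (blk_subset_act st_mem_act hzB)

lemma decomp_disj2 :
    Disjoint (act st σ S \ blk σ st) (Finset.univ \ act st σ S) := by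
  rw [Finset.disjoint_left]
  intro z hz hz'
  exact (Finset.mem_sdiff.1 hz').2 (Finset.mem_sdiff.1 hz).1

lemma NN_ge_card_act : (act st σ S).card ≤ NN st σ S := by
  rw [← biUnion_prt (st := st) (σ := σ) (S := S), NN]
  exact Finset.card_biUnion_le

lemma NA_two (hS : st ∉ S) (h : NN st σ S + AA st σ S = 2) : σ = 1 ∧ S = ∅ := by
  have hA := AA_pos (st := st) (σ := σ) (S := S)
  have hN : 1 ≤ NN st σ S := by
    have := Finset.card_pos.2 ⟨st, st_mem_act (st := st) (σ := σ) (S := S)⟩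
    have h2 := NN_ge_card_act (st := st) (σ := σ) (S := S)
    omega
  have hN1 : NN st σ S = 1 := by omega
  have hact : ∀ z ∈ act st σ S, z = st := by
    intro z hz
    have hcard : (act st σ S).card ≤ 1 := hN1 ▸ NN_ge_card_act
    exact Finset.card_le_one.1 hcard z hz st st_mem_act
  constructor
  · have hsupp : σ.support = ∅ := by
      by_contra hne
      obtain ⟨z, hz⟩ := Finset.nonempty_iff_ne_empty.2 hne
      have hz1 : z = st := hact z (support_subset_act hz)
      have hz2 : σ z ∈ σ.support := Equiv.Perm.apply_mem_support.2 hz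
      have hz3 : σ z = st := hact _ (support_subset_act hz2)
      exact (Equiv.Perm.mem_support.1 hz) (by rw [hz1] at hz3 ⊢; exact hz3)
    exact Equiv.Perm.support_eq_empty_iff.1 hsupp
  · refine Finset.eq_empty_iff_forall_notMem.2 (fun z hz => hS ?_)
    have := hact z (mem_act_iff.2 (Or.inr (Or.inl hz)))
    rwa [← this]

lemma act_id : act st (1 : Perm (Fin n)) (∅ : Finset (Fin n)) = {st} := by
  simp [act]

lemma prt_id : prt st (1 : Perm (Fin n)) (∅ : Finset (Fin n)) = {({st} : Finset (Fin n))} := by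
  rw [prt, act_id, Finset.image_singleton, blk_fixed (by simp)]

lemma NN_id : NN st (1 : Perm (Fin n)) (∅ : Finset (Fin n)) = 1 := by
  rw [NN, prt_id]; simp

lemma AA_id : AA st (1 : Perm (Fin n)) (∅ : Finset (Fin n)) = 1 := by
  rw [AA, prt_id]; simp

lemma VV_id : VV st (1 : Perm (Fin n)) (∅ : Finset (Fin n)) = 1 := by
  rw [VV, prt_id]; simp


theorem MM_main (st : Fin n) (k : ℕ) :
    ∀ (σ : Perm (Fin n)) (S : Finset (Fin n)), st ∉ S →
      (k + 2 < NN st σ S + AA st σ S → MM st σ S k = 0) ∧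
      (k + 2 = NN st σ S + AA st σ S →
        (MM st σ S k : ℚ) = (k.factorial : ℚ) * VV st σ S / ((NN st σ S).factorial : ℚ)) := by
  induction k with
  | zero =>
      intro σ S hS
      constructor
      · intro h
        rw [MM, if_neg]
        rintro ⟨rfl, rfl⟩
        rw [NN_id, AA_id] at h
        omega
      · intro h
        obtain ⟨rfl, rfl⟩ := NA_two hS h.symm
        rw [MM, if_pos ⟨rfl, rfl⟩, NN_id, VV_id]
        norm_num [Nat.factorial]
  | succ k IH =>
      intro σ S hS
      have hS' : ∀ a : Fin n, st ∉ S.erase a := fun a h => hS (Finset.mem_of_mem_erase h)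
      constructor
      · intro hlt
        rw [MM]
        apply Finset.sum_eq_zero
        intro a haU
        have ha : a ≠ st := (Finset.mem_erase.1 haU).1
        by_cases hsc : σ.SameCycle st a
        · by_cases heq : σ st = a
          · obtain ⟨r, hN, hA, -, -, -⟩ := caseI_numbers (S := S) ha heq
            exact (IH _ _ (hS' a)).1 (by omega)
          · obtain ⟨hN, hA⟩ := caseII_numbers (S := S) ha hsc heq
            exact (IH _ _ (hS' a)).1 (by omega)
        · by_cases hact : a ∈ act st σ S
          · obtain ⟨r, hN, hA, -, -⟩ := caseIII_numbers (S := S) ha hsc hact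
            exact (IH _ _ (hS' a)).1 (by omega)
          · obtain ⟨hN, hA⟩ := caseIV_numbers (S := S) ha hsc hact
            exact (IH _ _ (hS' a)).1 (by omega)
      · intro hk
        have hc0pos : (0:ℚ) < ((blk σ st).card : ℚ) := by
          exact_mod_cast Finset.card_pos.2 (blk_nonempty σ st)
        have hNfac : ((NN st σ S).factorial : ℚ) ≠ 0 := by
          exact_mod_cast (Nat.factorial_pos _).ne'
        set q : ℚ := (k.factorial : ℚ) * VV st σ S / ((NN st σ S).factorial : ℚ) with hq
        have hsum3 : ∑ a ∈ Finset.univ \ act st σ S,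
            ((MM st (σ * Equiv.swap a st) (S.erase a) k : ℚ)) = 0 := by
          apply Finset.sum_eq_zero
          intro a hmem
          have hact : a ∉ act st σ S := (Finset.mem_sdiff.1 hmem).2
          have ha : a ≠ st := fun h => hact (h ▸ st_mem_act)
          have hafix : σ a = a := by
            by_contra hfa
            exact hact (mem_act_iff.2 (Or.inl hfa))
          have hsc : ¬ σ.SameCycle st a := fun h => ha (sameCycle_fixed hafix h.symm)
          obtain ⟨hN, hA⟩ := caseIV_numbers (S := S) ha hsc hact
          rw [(IH _ _ (hS' a)).1 (by omega)]
          norm_num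
        have hsum2 : ∑ a ∈ act st σ S \ blk σ st,
            ((MM st (σ * Equiv.swap a st) (S.erase a) k : ℚ))
            = q * (((AA st σ S : ℚ) - 1)
              + (((NN st σ S : ℚ) - ((blk σ st).card : ℚ))/((blk σ st).card : ℚ))) := by
          have hterm : ∀ a ∈ act st σ S \ blk σ st,
              ((MM st (σ * Equiv.swap a st) (S.erase a) k : ℚ))
              = q * ((1:ℚ)/((blk σ a).card : ℚ) + 1/((blk σ st).card : ℚ)) := by
            intro a hmem
            obtain ⟨hact, hnB⟩ := Finset.mem_sdiff.1 hmem
            have ha : a ≠ st := fun h => hnB (h ▸ self_mem_blk σ st)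
            have hsc : ¬ σ.SameCycle st a := fun h => hnB (mem_blk.2 h)
            obtain ⟨r, hN, hA, hV, hV'⟩ := caseIII_numbers (S := S) ha hsc hact
            have hcapos : (0:ℚ) < ((blk σ a).card : ℚ) := by
              exact_mod_cast Finset.card_pos.2 (blk_nonempty σ a)
            rw [(IH _ _ (hS' a)).2 (by omega), hN, hV', hq, hV]
            field_simp
          rw [Finset.sum_congr rfl hterm, ← Finset.mul_sum, sum_weights]
        have hsum1 : ∑ a ∈ (blk σ st).erase st,
            ((MM st (σ * Equiv.swap a st) (S.erase a) k : ℚ))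
            = q * ((NN st σ S : ℚ) * (((blk σ st).card : ℚ) - 1)/((blk σ st).card : ℚ)) := by
          by_cases hfix : σ st = st
          · rw [blk_fixed hfix]
            simp [Finset.erase_singleton, blk_fixed hfix]
          · have hmem : σ st ∈ (blk σ st).erase st :=
              Finset.mem_erase.2 ⟨hfix, apply_mem_blk σ st⟩
            rw [Finset.sum_eq_single_of_mem (σ st) hmem ?side]
            case side =>
              intro b hb hbne
              have hbB : b ∈ blk σ st := Finset.mem_of_mem_erase hb
              have hbst : b ≠ st := (Finset.mem_erase.1 hb).1
              obtain ⟨hN, hA⟩ :=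
                caseII_numbers (S := S) hbst (mem_blk.1 hbB) (fun h => hbne h.symm)
              rw [(IH _ _ (hS' b)).1 (by omega)]
              norm_num
            · obtain ⟨r, hN, hA, hV, hV', hc2⟩ := caseI_numbers (S := S) hfix rfl
              rw [(IH _ _ (hS' (σ st))).2 (by omega), hV', hq, hV]
              have hNN : NN st σ S = NN st (σ * Equiv.swap (σ st) st) (S.erase (σ st)) + 1 :=
                hN.symm
              rw [hNN]
              rw [Nat.factorial_succ]
              have hfacpos : ((NN st (σ * Equiv.swap (σ st) st) (S.erase (σ st))).factorial : ℚ) ≠ 0 := by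
                exact_mod_cast (Nat.factorial_pos _).ne'
              push_cast
              clear hNN hN
              field_simp
        have hNA : (NN st σ S : ℚ) + (AA st σ S : ℚ) = (k : ℚ) + 3 := by
          have h' : (k + 1 + 2 : ℕ) = NN st σ S + AA st σ S := hk
          have h'' := congrArg (fun m : ℕ => (m : ℚ)) h'
          push_cast at h''
          linarith
        have hAA : (AA st σ S : ℚ) = (k : ℚ) + 3 - (NN st σ S : ℚ) := by linarith
        have hbr : ((NN st σ S : ℚ) * (((blk σ st).card : ℚ) - 1)/((blk σ st).card : ℚ))
            + (((AA st σ S : ℚ) - 1)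
              + (((NN st σ S : ℚ) - ((blk σ st).card : ℚ))/((blk σ st).card : ℚ)))
            = (k : ℚ) + 1 := by
          rw [hAA]
          field_simp
          ring
        rw [MM]
        push_cast
        rw [univ_erase_decomp (σ := σ) (S := S), Finset.sum_union decomp_disj1,
          Finset.sum_union decomp_disj2, hsum1, hsum2, hsum3, add_zero, ← mul_add, hbr]
        rw [Nat.factorial_succ]
        push_cast
        rw [hq]
        field_simp


lemma act_full : act st σ (Finset.univ.erase st) = Finset.univ := by
  apply Finset.eq_univ_of_forall
  intro x
  rcases eq_or_ne x st with rfl | hx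
  · exact st_mem_act
  · exact mem_act_iff.2 (Or.inr (Or.inl (Finset.mem_erase.2 ⟨hx, Finset.mem_univ x⟩)))

lemma prt_full_pairwise :
    (((prt st σ (Finset.univ.erase st)) : Finset (Finset (Fin n))) : Set (Finset (Fin n))).PairwiseDisjoint id :=
  fun c hc d hd hne => prt_disj hc hd hne

lemma NN_full : NN st σ (Finset.univ.erase st) = n := by
  rw [NN]
  have h : ((prt st σ (Finset.univ.erase st)).biUnion id).card
      = ∑ c ∈ prt st σ (Finset.univ.erase st), (id c).card :=
    Finset.card_biUnion (fun c _ d _ hne => prt_disj ‹c ∈ _› ‹d ∈ _› hne)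
  rw [biUnion_prt, act_full] at h
  simp only [id] at h
  rw [← h]
  simp

lemma blk_eq_cycleOf_support (hx : x ∈ σ.support) :
    (σ.cycleOf x).support = blk σ x := by
  ext y
  rw [Equiv.Perm.mem_support_cycleOf_iff, mem_blk]
  exact ⟨fun h => h.1, fun h => ⟨h, hx⟩⟩

lemma image_blk_support :
    σ.support.image (blk σ) = σ.cycleFactorsFinset.image Equiv.Perm.support := by
  ext c
  simp only [Finset.mem_image]
  constructor
  · rintro ⟨x, hx, rfl⟩
    exact ⟨σ.cycleOf x, Equiv.Perm.cycleOf_mem_cycleFactorsFinset_iff.2 hx,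
      blk_eq_cycleOf_support hx⟩
  · rintro ⟨g, hg, rfl⟩
    have hcy : g.IsCycle := (Equiv.Perm.mem_cycleFactorsFinset_iff.1 hg).1
    obtain ⟨x, hx⟩ := hcy.nonempty_support
    have hxs : x ∈ σ.support := Equiv.Perm.mem_cycleFactorsFinset_iff.1 hg
      |>.2 x hx |> (fun h => Equiv.Perm.mem_support.2 (by
        rw [← h]; exact Equiv.Perm.mem_support.1 hx))
    refine ⟨x, hxs, ?_⟩
    rw [← blk_eq_cycleOf_support hxs, Equiv.Perm.cycle_is_cycleOf hx hg]

lemma support_injOn_factors :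
    Set.InjOn Equiv.Perm.support (σ.cycleFactorsFinset : Set (Perm (Fin n))) := by
  intro c hc d hd h
  have hcy : c.IsCycle := (Equiv.Perm.mem_cycleFactorsFinset_iff.1 hc).1
  obtain ⟨x, hx⟩ := hcy.nonempty_support
  have hxd : x ∈ d.support := h ▸ hx
  rw [Equiv.Perm.cycle_is_cycleOf hx hc, Equiv.Perm.cycle_is_cycleOf hxd hd]

lemma blk_injOn_compl :
    Set.InjOn (blk σ) ((Finset.univ \ σ.support : Finset (Fin n)) : Set (Fin n)) := by
  intro x hx y hy h
  have hxf : σ x = x := by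
    have := (Finset.mem_sdiff.1 (by exact_mod_cast hx)).2
    simpa [Equiv.Perm.mem_support] using this
  have hyf : σ y = y := by
    have := (Finset.mem_sdiff.1 (by exact_mod_cast hy)).2
    simpa [Equiv.Perm.mem_support] using this
  rw [blk_fixed hxf, blk_fixed hyf] at h
  exact Finset.singleton_injective h

lemma prt_full_decomp :
    prt st σ (Finset.univ.erase st)
      = (σ.cycleFactorsFinset.image Equiv.Perm.support) ∪
        ((Finset.univ \ σ.support).image (blk σ)) := by
  rw [prt, act_full, ← image_blk_support, ← Finset.image_union]
  congr 1
  rw [Finset.union_sdiff_of_subset (Finset.subset_univ _)]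

lemma disjoint_images :
    Disjoint (σ.cycleFactorsFinset.image Equiv.Perm.support)
      ((Finset.univ \ σ.support).image (blk σ)) := by
  rw [Finset.disjoint_left]
  rintro c hc hc2
  obtain ⟨g, hg, rfl⟩ := Finset.mem_image.1 hc
  obtain ⟨x, hx, hxc⟩ := Finset.mem_image.1 hc2
  have hxf : σ x = x := by
    have := (Finset.mem_sdiff.1 hx).2
    simpa [Equiv.Perm.mem_support] using this
  have hcy : g.IsCycle := (Equiv.Perm.mem_cycleFactorsFinset_iff.1 hg).1
  have h2 : 2 ≤ g.support.card := hcy.two_le_card_support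
  rw [← hxc, blk_fixed hxf] at h2
  simp at h2

lemma AA_full : AA st σ (Finset.univ.erase st)
    = Multiset.card σ.cycleType + (n - σ.support.card) := by
  rw [AA, prt_full_decomp, Finset.card_union_of_disjoint disjoint_images]
  rw [Finset.card_image_of_injOn support_injOn_factors,
    Finset.card_image_of_injOn blk_injOn_compl]
  rw [Equiv.Perm.cycleType_def, Multiset.card_map]
  simp [Finset.card_sdiff_of_subset (Finset.subset_univ _)]

lemma VV_full : VV st σ (Finset.univ.erase st)
    = (σ.cycleType.map (fun m : ℕ => (m : ℚ))).prod := by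
  rw [VV, prt_full_decomp, Finset.prod_union disjoint_images]
  rw [Finset.prod_image (support_injOn_factors (σ := σ)),
    Finset.prod_image (blk_injOn_compl (σ := σ))]
  have h2 : ∀ x ∈ Finset.univ \ σ.support, (((blk σ x).card : ℚ)) = 1 := by
    intro x hx
    have hxf : σ x = x := by
      have := (Finset.mem_sdiff.1 hx).2
      simpa [Equiv.Perm.mem_support] using this
    rw [blk_fixed hxf]
    simp
  rw [Finset.prod_congr rfl h2, Finset.prod_const_one, mul_one]
  rw [Equiv.Perm.cycleType_def, Multiset.map_map]
  rfl


def SeqCond (st : Fin n) (σ : Perm (Fin n)) (S : Finset (Fin n)) {k : ℕ}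
    (a : Fin k → Fin n) : Prop :=
  (∀ i, a i ≠ st) ∧ (List.ofFn (fun i => Equiv.swap (a i) st)).prod = σ ∧
    ∀ s ∈ S, ∃ i, a i = s

lemma seqCond_iff {k : ℕ} (a : Fin (k+1) → Fin n) :
    SeqCond st σ S a ↔ (a (Fin.last k) ≠ st ∧
      SeqCond st (σ * Equiv.swap (a (Fin.last k)) st) (S.erase (a (Fin.last k)))
        (Fin.init a)) := by
  have hofn : (List.ofFn (fun i : Fin (k+1) => Equiv.swap (a i) st)).prod
      = (List.ofFn (fun i : Fin k => Equiv.swap (Fin.init a i) st)).prod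
        * Equiv.swap (a (Fin.last k)) st := by
    rw [List.ofFn_succ' (fun i : Fin (k+1) => Equiv.swap (a i) st), List.prod_concat]
    rfl
  constructor
  · rintro ⟨h1, h2, h3⟩
    refine ⟨h1 _, fun i => h1 _, ?_, ?_⟩
    · rw [← h2, hofn, mul_assoc, Equiv.swap_mul_self, mul_one]
    · intro s hs
      obtain ⟨hsx, hsS⟩ := Finset.mem_erase.1 hs
      obtain ⟨i, hi⟩ := h3 s hsS
      induction i using Fin.lastCases with
      | last => exact (hsx hi.symm).elim
      | cast j => exact ⟨j, hi⟩
  · rintro ⟨hx, h1, h2, h3⟩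
    refine ⟨?_, ?_, ?_⟩
    · intro i
      induction i using Fin.lastCases with
      | last => exact hx
      | cast j => exact h1 j
    · rw [hofn, h2, mul_assoc, Equiv.swap_mul_self, mul_one]
    · intro s hs
      by_cases hsx : s = a (Fin.last k)
      · exact ⟨Fin.last k, hsx.symm⟩
      · obtain ⟨j, hj⟩ := h3 s (Finset.mem_erase.2 ⟨hsx, hs⟩)
        exact ⟨j.castSucc, hj⟩

lemma card_seq (st : Fin n) (k : ℕ) : ∀ (σ : Perm (Fin n)) (S : Finset (Fin n)),
    Nat.card {a : Fin k → Fin n // SeqCond st σ S a} = MM st σ S k := by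
  induction k with
  | zero =>
      intro σ S
      rw [MM]
      by_cases h : σ = 1 ∧ S = ∅
      · rw [if_pos h]
        obtain ⟨rfl, rfl⟩ := h
        have huniq : ∀ a : Fin 0 → Fin n, SeqCond st 1 ∅ a :=
          fun a => ⟨fun i => i.elim0, by simp, by simp⟩
        rw [Nat.card_congr (Equiv.subtypeUnivEquiv huniq)]
        simp [Nat.card_eq_fintype_card]
      · rw [if_neg h]
        have hempty : IsEmpty {a : Fin 0 → Fin n // SeqCond st σ S a} := by
          refine ⟨?_⟩
          rintro ⟨a, h1, h2, h3⟩
          refine h ⟨?_, ?_⟩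
          · simpa using h2.symm
          · refine Finset.eq_empty_iff_forall_notMem.2 (fun s hs => ?_)
            obtain ⟨i, -⟩ := h3 s hs
            exact i.elim0
        exact Nat.card_of_isEmpty
  | succ k IH =>
      intro σ S
      classical
      rw [MM]
      have e : {a : Fin (k+1) → Fin n // SeqCond st σ S a} ≃
          Σ x : Fin n, {b : Fin k → Fin n //
            x ≠ st ∧ SeqCond st (σ * Equiv.swap x st) (S.erase x) b} := by
        refine Equiv.trans ((Fin.snocEquiv (fun _ => Fin n)).symm.subtypeEquiv ?_)
          (Equiv.subtypeProdEquivSigmaSubtype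
            (fun (x : Fin n) (b : Fin k → Fin n) =>
              x ≠ st ∧ SeqCond st (σ * Equiv.swap x st) (S.erase x) b))
        intro a
        rw [seqCond_iff]
        rfl
      rw [Nat.card_congr e, Nat.card_eq_fintype_card, Fintype.card_sigma]
      rw [← Finset.sum_erase_add _ _ (Finset.mem_univ st)]
      have hst0 : Fintype.card {b : Fin k → Fin n //
          st ≠ st ∧ SeqCond st (σ * Equiv.swap st st) (S.erase st) b} = 0 := by
        haveI : IsEmpty {b : Fin k → Fin n //
            st ≠ st ∧ SeqCond st (σ * Equiv.swap st st) (S.erase st) b} :=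
          ⟨fun b => b.2.1 rfl⟩
        exact Fintype.card_eq_zero
      rw [hst0, add_zero]
      apply Finset.sum_congr rfl
      intro x hx
      have hxne : x ≠ st := (Finset.mem_erase.1 hx).1
      have e2 : {b : Fin k → Fin n //
          x ≠ st ∧ SeqCond st (σ * Equiv.swap x st) (S.erase x) b} ≃
          {b : Fin k → Fin n // SeqCond st (σ * Equiv.swap x st) (S.erase x) b} :=
        Equiv.subtypeEquivRight (fun b => and_iff_right hxne)
      rw [← IH (σ * Equiv.swap x st) (S.erase x), ← Nat.card_eq_fintype_card,
        Nat.card_congr e2]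


lemma key_extract {L : ℕ} {τ : Fin L → Perm (Fin n)}
    (h1 : ∀ i, ∃ a : Fin n, a ≠ st ∧ τ i = Equiv.swap a st) (i : Fin L) :
    τ i st ≠ st ∧ τ i = Equiv.swap (τ i st) st := by
  obtain ⟨b, hb, heq⟩ := h1 i
  have happ : τ i st = b := by rw [heq, Equiv.swap_apply_right]
  rw [happ, heq]
  exact ⟨hb, rfl⟩

noncomputable def main_equiv (st : Fin n) (ρ : Perm (Fin n)) (L : ℕ) :
    {τ : Fin L → Perm (Fin n) //
      (∀ i, ∃ a : Fin n, a ≠ st ∧ τ i = Equiv.swap a st) ∧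
      (List.ofFn τ).prod = ρ ∧ TransitiveFactors τ} ≃
    {a : Fin L → Fin n // SeqCond st ρ (Finset.univ.erase st) a} := by
  refine ⟨fun p => ⟨fun i => p.1 i st, ?_⟩, fun q => ⟨fun i => Equiv.swap (q.1 i) st, ?_⟩,
    ?_, ?_⟩
  · obtain ⟨τ, h1, h2, h3⟩ := p
    have key := key_extract h1
    refine ⟨fun i => (key i).1, ?_, ?_⟩
    · have : (fun i => Equiv.swap (τ i st) st) = τ := funext (fun i => ((key i).2).symm)
      rw [this]
      exact h2
    · intro s hs
      have hsne : s ≠ st := (Finset.mem_erase.1 hs).1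
      by_contra hnone
      push_neg at hnone
      have hfix : ∀ g ∈ Subgroup.closure (Set.range τ), g s = s := by
        intro g hg
        induction hg using Subgroup.closure_induction with
        | mem g hgm =>
            obtain ⟨i, rfl⟩ := hgm
            rw [(key i).2]
            exact Equiv.swap_apply_of_ne_of_ne (fun h => hnone i h.symm) hsne
        | one => rfl
        | mul g h hgm hhm ihg ihh => rw [Equiv.Perm.mul_apply, ihh, ihg]
        | inv g hgm ihg => rw [← ihg, Equiv.Perm.inv_def, Equiv.symm_apply_apply, ihg]
      obtain ⟨g, hg, hgs⟩ := h3 s st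
      exact hsne (by rw [← hgs, hfix g hg])
  · obtain ⟨a, g1, g2, g3⟩ := q
    refine ⟨fun i => ⟨a i, g1 i, rfl⟩, g2, ?_⟩
    have reach : ∀ x : Fin n, ∃ g ∈ Subgroup.closure
        (Set.range (fun i => Equiv.swap (a i) st)), g x = st := by
      intro x
      rcases eq_or_ne x st with rfl | hx
      · exact ⟨1, Subgroup.one_mem _, rfl⟩
      · obtain ⟨i, hi⟩ := g3 x (Finset.mem_erase.2 ⟨hx, Finset.mem_univ x⟩)
        refine ⟨Equiv.swap (a i) st, Subgroup.subset_closure ⟨i, rfl⟩, ?_⟩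
        rw [hi, Equiv.swap_apply_left]
    intro x y
    obtain ⟨g, hg, hgx⟩ := reach x
    obtain ⟨h, hh, hhy⟩ := reach y
    refine ⟨h⁻¹ * g, Subgroup.mul_mem _ (Subgroup.inv_mem _ hh) hg, ?_⟩
    rw [Equiv.Perm.mul_apply, hgx, ← hhy, Equiv.Perm.inv_def, Equiv.symm_apply_apply]
  · rintro ⟨τ, h1, h2, h3⟩
    apply Subtype.ext
    funext i
    exact ((key_extract h1 i).2).symm
  · rintro ⟨a, g1, g2, g3⟩
    apply Subtype.ext
    funext i
    exact Equiv.swap_apply_right _ _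
end Part

theorem stmt_14 (n : ℕ) (hn : 1 ≤ n) (α : Multiset ℕ) (hpos : ∀ a ∈ α, 0 < a)
    (hsum : α.sum = n) (ρ : Equiv.Perm (Fin n)) (hρ : fullCycleType ρ = α) :
    (Nat.card {τ : Fin (n + α.card - 2) → Equiv.Perm (Fin n) //
        (∀ i, ∃ a : Fin n, a ≠ ⟨n - 1, by omega⟩ ∧
            τ i = Equiv.swap a ⟨n - 1, by omega⟩) ∧
        (List.ofFn τ).prod = ρ ∧ TransitiveFactors τ} : ℚ)
      = ((n + α.card - 2).factorial : ℚ) * (α.map fun a : ℕ => (a : ℚ)).prod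
          / (n.factorial : ℚ) := by
  have hst : n - 1 < n := by omega
  show (Nat.card {τ : Fin (n + Multiset.card α - 2) → Equiv.Perm (Fin n) //
        (∀ i, ∃ a : Fin n, a ≠ ⟨n - 1, hst⟩ ∧
            τ i = Equiv.swap a ⟨n - 1, hst⟩) ∧
        (List.ofFn τ).prod = ρ ∧ TransitiveFactors τ} : ℚ)
      = ((n + Multiset.card α - 2).factorial : ℚ) * (α.map fun a : ℕ => (a : ℚ)).prod
          / (n.factorial : ℚ)
  have hcard : Nat.card {τ : Fin (n + Multiset.card α - 2) → Equiv.Perm (Fin n) //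
      (∀ i, ∃ a : Fin n, a ≠ ⟨n - 1, hst⟩ ∧ τ i = Equiv.swap a ⟨n - 1, hst⟩) ∧
      (List.ofFn τ).prod = ρ ∧ TransitiveFactors τ}
      = MM ⟨n - 1, hst⟩ ρ (Finset.univ.erase ⟨n - 1, hst⟩) (n + Multiset.card α - 2) := by
    rw [Nat.card_congr (main_equiv ⟨n - 1, hst⟩ ρ (n + Multiset.card α - 2)), card_seq]
  have hNN : NN ⟨n - 1, hst⟩ ρ (Finset.univ.erase ⟨n - 1, hst⟩) = n := NN_full
  have hAA : AA ⟨n - 1, hst⟩ ρ (Finset.univ.erase ⟨n - 1, hst⟩) = Multiset.card α := by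
    rw [AA_full, ← hρ, fullCycleType, Multiset.card_add, Multiset.card_replicate]
  have hVV : VV ⟨n - 1, hst⟩ ρ (Finset.univ.erase ⟨n - 1, hst⟩)
      = (α.map fun a : ℕ => (a : ℚ)).prod := by
    rw [VV_full, ← hρ, fullCycleType, Multiset.map_add, Multiset.prod_add,
      Multiset.map_replicate, Multiset.prod_replicate]
    norm_num
  have hA1 : 1 ≤ Multiset.card α := by
    rw [← hAA]; exact AA_pos
  have hL2 : n + Multiset.card α - 2 + 2
      = NN ⟨n - 1, hst⟩ ρ (Finset.univ.erase ⟨n - 1, hst⟩)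
        + AA ⟨n - 1, hst⟩ ρ (Finset.univ.erase ⟨n - 1, hst⟩) := by
    clear hcard hρ hpos hsum hVV
    omega
  have hmm := (MM_main ⟨n - 1, hst⟩ (n + Multiset.card α - 2) ρ
    (Finset.univ.erase ⟨n - 1, hst⟩) (Finset.notMem_erase _ _)).2 hL2
  rw [hcard, hmm, hNN, hVV]
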